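/- Let AB and CD be distinct oriented prime segments such that f_AB(C) = 1, f_AB(D) = 0, and f_CD(A) = 1. Then the line through A and B intersects the segment CD in exactly one point X, and A lies on the segment XB. -/

import Mathlib

/-- Cast an integer point to the real plane. -/
def toR (p : ℤ × ℤ) : ℝ × ℝ := ((p.1 : ℝ), (p.2 : ℝ))

/-- Signed area determinant Δ(P,Q,R). -/
def Det (P Q R : ℤ × ℤ) : ℤ :=
  (Q.1 - P.1) * (R.2 - P.2) - (Q.2 - P.2) * (R.1 - P.1)

/-- Two integer points are adjacent: distinct, and the segment between them
contains no integer point other than the endpoints. -/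
def Adjacent (A B : ℤ × ℤ) : Prop :=
  A ≠ B ∧ ∀ C : ℤ × ℤ, toR C ∈ segment ℝ (toR A) (toR B) → C = A ∨ C = B

/-- The {0,1}-valued (Bool-valued) function defined by the oriented prime
segment AB: on the line through A and B it is true iff the point is strictly
closer to A than to B; off the line it is true iff triangle A B X is
counterclockwise. -/
def fseg (A B X : ℤ × ℤ) : Bool :=
  if Det A B X = 0 then
    decide ((X.1 - A.1) ^ 2 + (X.2 - A.2) ^ 2 < (X.1 - B.1) ^ 2 + (X.2 - B.2) ^ 2)
  else
    decide (0 < Det A B X)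

/-- The grid {0,…,m−1} × {0,…,n−1} as a set of integer points. -/
def Grid (m n : ℕ) : Set (ℤ × ℤ) :=
  {p | 0 ≤ p.1 ∧ p.1 < (m : ℤ) ∧ 0 ≤ p.2 ∧ p.2 < (n : ℤ)}

/-- A pair of oriented prime segments (A,B), (C,D) is proper. -/
def ProperPair (A B C D : ℤ × ℤ) : Prop :=
  Adjacent A B ∧ Adjacent C D ∧
    fseg C D A = true ∧ fseg C D B = true ∧ fseg A B C = true ∧ fseg A B D = true

/-- f is a threshold function on the grid. -/
def IsThreshold (m n : ℕ) (f : ℤ × ℤ → Bool) : Prop :=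
  ∃ a0 a1 a2 : ℝ, ∀ p ∈ Grid m n,
    (f p = true ↔ a1 * (p.1 : ℝ) + a2 * (p.2 : ℝ) ≥ a0)

/-- f is a 2-threshold function on the grid: a conjunction of two threshold
functions. -/
def Is2Threshold (m n : ℕ) (f : ℤ × ℤ → Bool) : Prop :=
  ∃ g h : ℤ × ℤ → Bool, IsThreshold m n g ∧ IsThreshold m n h ∧
    ∀ p ∈ Grid m n, f p = (g p && h p)

/-!
Put `α = Δ(A,B,C) ≥ 0 ≥ β = Δ(A,B,D)`. As `Δ(A,B,·)` is affine, it vanishes at exactly one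
point `X = C + α / (α - β) • (D - C)` of the segment `CD` as soon as `α ≠ β`. On the other hand
`Δ(C,D,·)` vanishes at `X`, is nonnegative at `A`, and `Δ(C,D,B) - Δ(C,D,A) = α - β > 0`; so
along the line `AB` it grows from `X` through `A` to `B`, which puts `A` between `X` and `B`.
-/

def detR (p q r : ℝ × ℝ) : ℝ :=
  (q.1 - p.1) * (r.2 - p.2) - (q.2 - p.2) * (r.1 - p.1)

section

open AffineMap Set

lemma toR_injective : Function.Injective toR := fun P Q h => by
  simp only [toR, Prod.ext_iff, Int.cast_inj] at h
  exact Prod.ext h.1 h.2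

lemma detR_toR (P Q R : ℤ × ℤ) : detR (toR P) (toR Q) (toR R) = Det P Q R := by
  simp only [detR, toR, Det]
  push_cast
  ring

lemma detR_lineMap (p q c d : ℝ × ℝ) (t : ℝ) :
    detR p q (lineMap c d t) = (1 - t) * detR p q c + t * detR p q d := by
  simp only [detR, lineMap_apply_module', Prod.fst_add, Prod.snd_add, Prod.smul_fst,
    Prod.smul_snd, Prod.fst_sub, Prod.snd_sub, smul_eq_mul]
  ring

lemma detR_lineMap_self (c d : ℝ × ℝ) (t : ℝ) : detR c d (lineMap c d t) = 0 := by
  rw [detR_lineMap]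
  simp only [detR]
  ring

lemma detR_sub_detR_eq (a b c d : ℝ × ℝ) :
    detR c d b - detR c d a = detR a b c - detR a b d := by
  simp only [detR]
  ring

lemma sub_sq_add_sub_sq_pos {a b : ℝ × ℝ} (hab : a ≠ b) :
    0 < (b.1 - a.1) ^ 2 + (b.2 - a.2) ^ 2 := by
  by_contra! h
  refine hab (Prod.ext ?_ ?_) <;> nlinarith [sq_nonneg (b.1 - a.1), sq_nonneg (b.2 - a.2)]

lemma detR_eq_zero_iff_mem_affineSpan_pair {a b x : ℝ × ℝ} (hab : a ≠ b) :
    detR a b x = 0 ↔ x ∈ line[ℝ, a, b] := by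
  rw [mem_affineSpan_pair_iff_exists_lineMap_eq]
  constructor
  · intro h
    have hN := (sub_sq_add_sub_sq_pos hab).ne'
    -- the orthogonal projection of `x - a` onto `b - a` is all of it
    refine ⟨((x.1 - a.1) * (b.1 - a.1) + (x.2 - a.2) * (b.2 - a.2)) /
      ((b.1 - a.1) ^ 2 + (b.2 - a.2) ^ 2), Prod.ext ?_ ?_⟩ <;>
      simp only [detR, lineMap_apply_module', Prod.fst_add, Prod.snd_add, Prod.smul_fst,
        Prod.smul_snd, Prod.fst_sub, Prod.snd_sub, smul_eq_mul] at h ⊢ <;>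
      field_simp
    · linear_combination (b.2 - a.2) * h
    · linear_combination (a.1 - b.1) * h
  · rintro ⟨r, rfl⟩
    exact detR_lineMap_self a b r

lemma collinear_iff_mem_affineSpan_pair {a b x : ℝ × ℝ} (hab : a ≠ b) :
    Collinear ℝ ({a, b, x} : Set (ℝ × ℝ)) ↔ x ∈ line[ℝ, a, b] := by
  refine ⟨fun h => h.mem_affineSpan_of_mem_of_ne (by simp) (by simp) (by simp) hab, fun h => ?_⟩
  have h' := collinear_insert_of_mem_affineSpan_pair h
  rwa [insert_comm, pair_comm] at h'

lemma collinear_iff_detR_eq_zero {a b x : ℝ × ℝ} (hab : a ≠ b) :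
    Collinear ℝ ({a, b, x} : Set (ℝ × ℝ)) ↔ detR a b x = 0 :=
  (collinear_iff_mem_affineSpan_pair hab).trans (detR_eq_zero_iff_mem_affineSpan_pair hab).symm

lemma lineMap_mem_segment_lineMap (a b : ℝ × ℝ) {r s t : ℝ} (ht : t ∈ Icc r s) :
    lineMap a b t ∈ segment ℝ (lineMap a b r) (lineMap a b s) := by
  rw [← image_segment, segment_eq_Icc (ht.1.trans ht.2)]
  exact mem_image_of_mem _ ht

lemma det_nonneg_of_fseg_eq_true {A B X : ℤ × ℤ} (h : fseg A B X = true) : 0 ≤ Det A B X := by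
  unfold fseg at h
  split_ifs at h with h0
  · exact h0.ge
  · exact (decide_eq_true_iff.mp h).le

lemma det_nonpos_of_fseg_eq_false {A B X : ℤ × ℤ} (h : fseg A B X = false) : Det A B X ≤ 0 := by
  unfold fseg at h
  split_ifs at h with h0
  · exact h0.le
  · exact not_lt.mp (decide_eq_false_iff_not.mp h)

lemma fseg_eq_true_iff_of_lineMap_eq {A B C : ℤ × ℤ} {k : ℝ} (hAB : A ≠ B)
    (hk : lineMap (toR A) (toR B) k = toR C) : fseg A B C = true ↔ 2 * k < 1 := by
  have hC0 : Det A B C = 0 := by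
    have := detR_lineMap_self (toR A) (toR B) k
    rwa [hk, detR_toR, Int.cast_eq_zero] at this
  have hC1 : (C.1 : ℝ) = A.1 + k * (B.1 - A.1) := by
    simpa [toR, lineMap_apply_module', add_comm] using (congrArg Prod.fst hk).symm
  have hC2 : (C.2 : ℝ) = A.2 + k * (B.2 - A.2) := by
    simpa [toR, lineMap_apply_module', add_comm] using (congrArg Prod.snd hk).symm
  have hN := sub_sq_add_sub_sq_pos (toR_injective.ne hAB)
  simp only [toR] at hN
  simp only [fseg, hC0, if_true, decide_eq_true_iff]
  rw [← @Int.cast_lt ℝ]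
  push_cast
  rw [hC1, hC2]
  constructor <;> intro h <;> nlinarith

lemma notMem_Ioo_of_lineMap_eq {A B C : ℤ × ℤ} {k : ℝ} (hAB : Adjacent A B)
    (hk : lineMap (toR A) (toR B) k = toR C) : k ∉ Ioo 0 1 := by
  intro hk01
  have hinj := lineMap_injective ℝ (toR_injective.ne hAB.1)
  rcases hAB.2 C (hk ▸ lineMap_mem_segment ℝ _ _ (Ioo_subset_Icc_self hk01)) with rfl | rfl
  · exact hk01.1.ne' (hinj (hk.trans (lineMap_apply_zero _ _).symm))
  · exact hk01.2.ne (hinj (hk.trans (lineMap_apply_one _ _).symm))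

/-- If `C` and `D` both lay on the line `AB`, the values of `f_AB` would force `C` before `A`
and `D` beyond `B`, so the prime segment `CD` would contain both `A` and `B`. -/
lemma det_ne_zero_or_det_ne_zero {A B C D : ℤ × ℤ} (hAB : Adjacent A B) (hCD : Adjacent C D)
    (hne : (A, B) ≠ (C, D)) (hC : fseg A B C = true) (hD : fseg A B D = false) :
    Det A B C ≠ 0 ∨ Det A B D ≠ 0 := by
  by_contra! h
  have hab := toR_injective.ne hAB.1
  have hline {X : ℤ × ℤ} (hX : Det A B X = 0) : ∃ k : ℝ, lineMap (toR A) (toR B) k = toR X := by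
    rw [← mem_affineSpan_pair_iff_exists_lineMap_eq, ← detR_eq_zero_iff_mem_affineSpan_pair hab,
      detR_toR, hX, Int.cast_zero]
  obtain ⟨k, hk⟩ := hline h.1
  obtain ⟨l, hl⟩ := hline h.2
  have hk0 : k ≤ 0 := by
    have hhalf := (fseg_eq_true_iff_of_lineMap_eq hAB.1 hk).mp hC
    by_contra! hpos
    exact notMem_Ioo_of_lineMap_eq hAB hk ⟨hpos, by linarith⟩
  have hl1 : 1 ≤ l := by
    have hhalf := (fseg_eq_true_iff_of_lineMap_eq hAB.1 hl).not.mp (by simp [hD])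
    by_contra! hlt
    exact notMem_Ioo_of_lineMap_eq hAB hl ⟨by linarith, hlt⟩
  have hends {X : ℤ × ℤ} {p : ℝ} (hp : lineMap (toR A) (toR B) p = toR X) (hpkl : p ∈ Icc k l) :
      X = C ∨ X = D :=
    hCD.2 X (by rw [← hp, ← hk, ← hl]; exact lineMap_mem_segment_lineMap _ _ hpkl)
  rcases hends (lineMap_apply_zero _ _) ⟨hk0, by linarith⟩ with rfl | rfl
  · rcases hends (lineMap_apply_one _ _) ⟨by linarith, hl1⟩ with rfl | rfl
    · exact hAB.1 rfl
    · exact hne rfl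
  · linarith [lineMap_injective ℝ hab (hl.trans (lineMap_apply_zero _ _).symm)]

lemma exists_collinear_lineMap_iff {a b c d : ℝ × ℝ} (hc : 0 ≤ detR a b c) (hd : detR a b d ≤ 0)
    (hlt : detR a b d < detR a b c) :
    ∃ t ∈ Icc (0 : ℝ) 1, ∀ s, Collinear ℝ ({a, b, lineMap c d s} : Set (ℝ × ℝ)) ↔ s = t := by
  have hab : a ≠ b := by
    rintro rfl
    simp [detR] at hlt
  have hden : 0 < detR a b c - detR a b d := sub_pos.mpr hlt
  refine ⟨detR a b c / (detR a b c - detR a b d),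
    ⟨div_nonneg hc hden.le, (div_le_one hden).mpr (by linarith)⟩, fun s => ?_⟩
  rw [collinear_iff_detR_eq_zero hab, detR_lineMap, eq_div_iff hden.ne']
  constructor <;> intro h <;> linarith

lemma mem_segment_of_collinear_of_detR_eq_zero {a b c d x : ℝ × ℝ}
    (hx : Collinear ℝ ({a, b, x} : Set (ℝ × ℝ))) (hxcd : detR c d x = 0) (ha : 0 ≤ detR c d a)
    (hab : detR c d a < detR c d b) : a ∈ segment ℝ x b := by
  have hne : a ≠ b := by
    rintro rfl
    exact hab.false
  obtain ⟨s, rfl⟩ := mem_affineSpan_pair_iff_exists_lineMap_eq.mp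
    ((collinear_iff_mem_affineSpan_pair hne).mp hx)
  rw [detR_lineMap] at hxcd
  have hs : s ≤ 0 := by nlinarith
  simpa using lineMap_mem_segment_lineMap a b (show (0 : ℝ) ∈ Icc s 1 from ⟨hs, zero_le_one⟩)

end

/-- for distinct oriented prime segments AB, CD with
f_AB(C)=1, f_AB(D)=0, f_CD(A)=1, the line through A and B meets the segment CD
in exactly one point X, and A lies on the segment XB. -/
theorem stmt17 (A B C D : ℤ × ℤ)
    (hAB : Adjacent A B) (hCD : Adjacent C D) (hne : (A, B) ≠ (C, D))
    (h1 : fseg A B C = true) (h2 : fseg A B D = false) (h3 : fseg C D A = true) :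
    ∃ X : ℝ × ℝ,
      (X ∈ segment ℝ (toR C) (toR D) ∧
        Collinear ℝ ({toR A, toR B, X} : Set (ℝ × ℝ))) ∧
      (∀ Y : ℝ × ℝ, Y ∈ segment ℝ (toR C) (toR D) →
        Collinear ℝ ({toR A, toR B, Y} : Set (ℝ × ℝ)) → Y = X) ∧
      toR A ∈ segment ℝ X (toR B) := by
  have hC := det_nonneg_of_fseg_eq_true h1
  have hD := det_nonpos_of_fseg_eq_false h2
  have hA := det_nonneg_of_fseg_eq_true h3
  have hlt : Det A B D < Det A B C := by
    rcases det_ne_zero_or_det_ne_zero hAB hCD hne h1 h2 with h | h <;> omega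
  rify at hC hD hA hlt
  simp only [← detR_toR] at hC hD hA hlt
  obtain ⟨t, ht, hcol⟩ := exists_collinear_lineMap_iff hC hD hlt
  refine ⟨AffineMap.lineMap (toR C) (toR D) t,
    ⟨lineMap_mem_segment ℝ _ _ ht, (hcol t).mpr rfl⟩, ?_, ?_⟩
  · intro Y hY hYcol
    obtain ⟨s, -, rfl⟩ := (segment_eq_image_lineMap ℝ _ _).subset hY
    rw [(hcol s).mp hYcol]
  · refine mem_segment_of_collinear_of_detR_eq_zero ((hcol t).mpr rfl)
      (detR_lineMap_self _ _ t) hA ?_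
    rwa [← sub_pos, detR_sub_detR_eq, sub_pos]
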